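/- arXiv:1506.07707 — 2 statements merged into one kernel-verified Lean document; each statement's English description precedes it below -/
import Mathlib

section
/- Let 𝔸 and 𝔹 be categories with finite limits, V : 𝔸 → 𝔹 a faithful functor preserving finite limits, and p : V×V×V → V a V-Mal'tsev operation. Given f : A → B, r : B → A, g : C → B, s : B → C with f∘r = 1_B = g∘s, morphisms α : A → D, β : B → D, γ : C → D with α∘r = β = γ∘s, and a morphism φ : A×_B C → D with φ∘⟨1_A, s∘f⟩ = α and φ∘⟨r∘g, 1_C⟩ = γ, then V(φ) = p_D ∘ ⟨V(α∘π₁), V(β∘f∘π₁), V(γ∘π₂)⟩, where π₁ : A×_B C → A and π₂ : A×_B C → C are the pullback projections (note V preserves the pullback, so this equation makes sense in 𝔹). -/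
/-!
Write `π₁, π₂` for the projections of `P = A ×_B C` and `e₁ = ⟨1, s f⟩`, `e₂ = ⟨r g, 1⟩`.
Since `V` preserves the pullback, `V(π₁)` and `V(π₂)` are jointly monic, and the Mal'tsev
identities then show `1_{V P} = p_P ∘ ⟨V(e₁ π₁), V(e₁ r f π₁), V(e₂ π₂)⟩`. Composing with `V(φ)`
and using naturality of `p` turns the right-hand side into the claimed formula.
-/

open CategoryTheory CategoryTheory.Limits

structure VMaltsevOperation {𝔸 𝔹 : Type*} [Category 𝔸] [Category 𝔹]
    [HasFiniteLimits 𝔹] (V : 𝔸 ⥤ 𝔹) where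
  app : ∀ A : 𝔸, (V.obj A ⨯ V.obj A ⨯ V.obj A) ⟶ V.obj A
  naturality : ∀ {A A' : 𝔸} (f : A ⟶ A'),
    prod.map (V.map f) (prod.map (V.map f) (V.map f)) ≫ app A' = app A ≫ V.map f
  maltsev_left : ∀ {T : 𝔹} {A : 𝔸} (x y : T ⟶ V.obj A),
    prod.lift x (prod.lift y y) ≫ app A = x
  maltsev_right : ∀ {T : 𝔹} {A : 𝔸} (x y : T ⟶ V.obj A),
    prod.lift y (prod.lift y x) ≫ app A = x

namespace VMaltsevOperation

variable {𝔸 𝔹 : Type*} [Category 𝔸] [Category 𝔹] [HasFiniteLimits 𝔹] {V : 𝔸 ⥤ 𝔹}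
  (p : VMaltsevOperation V)

@[simp]
theorem lift_app_comp_map {T : 𝔹} {X Y : 𝔸} (x y z : T ⟶ V.obj X) (h : X ⟶ Y) :
    prod.lift x (prod.lift y z) ≫ p.app X ≫ V.map h =
      prod.lift (x ≫ V.map h) (prod.lift (y ≫ V.map h) (z ≫ V.map h)) ≫ p.app Y := by
  rw [← p.naturality, ← Category.assoc, prod.lift_map, prod.lift_map]

theorem lift_app_pullback_eq_id {A B C : 𝔸} {f : A ⟶ B} {r : B ⟶ A} {g : C ⟶ B} {s : B ⟶ C}
    [HasPullback f g] [PreservesLimit (cospan f g) V]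
    {e₁ : A ⟶ pullback f g} {e₂ : C ⟶ pullback f g} (hr : r ≫ f = 𝟙 B)
    (he₁₁ : e₁ ≫ pullback.fst f g = 𝟙 A) (he₁₂ : e₁ ≫ pullback.snd f g = f ≫ s)
    (he₂₁ : e₂ ≫ pullback.fst f g = g ≫ r) (he₂₂ : e₂ ≫ pullback.snd f g = 𝟙 C) :
    prod.lift (V.map (pullback.fst f g ≫ e₁))
        (prod.lift (V.map (pullback.fst f g ≫ f ≫ r ≫ e₁)) (V.map (pullback.snd f g ≫ e₂)))
        ≫ p.app (pullback f g) = 𝟙 _ := by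
  apply ((IsPullback.of_hasPullback f g).map V).hom_ext
  · simp only [Category.assoc, p.lift_app_comp_map, ← V.map_comp, he₁₁, he₂₁,
      ← pullback.condition_assoc, Category.comp_id, Category.id_comp, p.maltsev_left]
  · simp only [Category.assoc, p.lift_app_comp_map, ← V.map_comp, he₁₂, he₂₂,
      reassoc_of% hr, Category.comp_id, Category.id_comp, p.maltsev_right]

end VMaltsevOperation

theorem V_map_of_morphism_from_pullback_general
    {𝔸 𝔹 : Type*} [Category 𝔸] [Category 𝔹]
    [HasFiniteLimits 𝔸] [HasFiniteLimits 𝔹]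
    (V : 𝔸 ⥤ 𝔹) [PreservesFiniteLimits V]
    (p : VMaltsevOperation V)
    {A B C D : 𝔸} (f : A ⟶ B) (r : B ⟶ A) (g : C ⟶ B) (s : B ⟶ C)
    (hr : r ≫ f = 𝟙 B)
    (α : A ⟶ D) (β : B ⟶ D) (γ : C ⟶ D)
    (hα : r ≫ α = β)
    (e₁ : A ⟶ pullback f g)
    (he₁₁ : e₁ ≫ pullback.fst f g = 𝟙 A) (he₁₂ : e₁ ≫ pullback.snd f g = f ≫ s)
    (e₂ : C ⟶ pullback f g)
    (he₂₁ : e₂ ≫ pullback.fst f g = g ≫ r) (he₂₂ : e₂ ≫ pullback.snd f g = 𝟙 C)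
    (φ : pullback f g ⟶ D)
    (hφ₁ : e₁ ≫ φ = α) (hφ₂ : e₂ ≫ φ = γ) :
    V.map φ =
      prod.lift (V.map (pullback.fst f g ≫ α))
        (prod.lift (V.map (pullback.fst f g ≫ f ≫ β)) (V.map (pullback.snd f g ≫ γ)))
        ≫ p.app D := by
  calc V.map φ
      = (prod.lift (V.map (pullback.fst f g ≫ e₁))
          (prod.lift (V.map (pullback.fst f g ≫ f ≫ r ≫ e₁)) (V.map (pullback.snd f g ≫ e₂)))
          ≫ p.app (pullback f g)) ≫ V.map φ := by
        rw [p.lift_app_pullback_eq_id hr he₁₁ he₁₂ he₂₁ he₂₂, Category.id_comp]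
    _ = _ := by
        simp only [Category.assoc, p.lift_app_comp_map, ← V.map_comp, hφ₁, hφ₂, hα]

/-- When a morphism `φ : A ×_B C ⟶ D` with `φ ∘ e₁ = α` and `φ ∘ e₂ = γ` exists,
its image under `V` is given by the Mal'tsev formula
`V(φ) = p_D ∘ ⟨V(α∘π₁), V(β∘f∘π₁), V(γ∘π₂)⟩`. -/
theorem V_map_of_morphism_from_pullback
    {𝔸 𝔹 : Type*} [Category 𝔸] [Category 𝔹]
    [HasFiniteLimits 𝔸] [HasFiniteLimits 𝔹]
    (V : 𝔸 ⥤ 𝔹) [V.Faithful] [PreservesFiniteLimits V]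
    (p : VMaltsevOperation V)
    {A B C D : 𝔸} (f : A ⟶ B) (r : B ⟶ A) (g : C ⟶ B) (s : B ⟶ C)
    (hr : r ≫ f = 𝟙 B) (hs : s ≫ g = 𝟙 B)
    (α : A ⟶ D) (β : B ⟶ D) (γ : C ⟶ D)
    (hα : r ≫ α = β) (hγ : s ≫ γ = β)
    (e₁ : A ⟶ pullback f g)
    (he₁₁ : e₁ ≫ pullback.fst f g = 𝟙 A) (he₁₂ : e₁ ≫ pullback.snd f g = f ≫ s)
    (e₂ : C ⟶ pullback f g)
    (he₂₁ : e₂ ≫ pullback.fst f g = g ≫ r) (he₂₂ : e₂ ≫ pullback.snd f g = 𝟙 C)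
    (φ : pullback f g ⟶ D)
    (hφ₁ : e₁ ≫ φ = α) (hφ₂ : e₂ ≫ φ = γ) :
    V.map φ =
      prod.lift (V.map (pullback.fst f g ≫ α))
        (prod.lift (V.map (pullback.fst f g ≫ f ≫ β)) (V.map (pullback.snd f g ≫ γ)))
        ≫ p.app D :=
  V_map_of_morphism_from_pullback_general V p f r g s hr α β γ hα e₁ he₁₁ he₁₂ e₂ he₂₁ he₂₂ φ hφ₁
    hφ₂
end

section
/- Let 𝔸 and 𝔹 be categories with finite limits, V : 𝔸 → 𝔹 a faithful functor preserving finite limits, and p : V×V×V → V a V-Mal'tsev operation. Let A be an object of 𝔸 with endomorphisms s, t : A → A satisfying s∘t = t and t∘s = s, for which property (P1) holds. Then for every object X of 𝔸 and morphisms x₁, x₂, y₂, z₃ : X → A with s∘x₁ = s∘x₂ = s∘y₂ and t∘y₂ = t∘z₃, one has p_A⟨Vx₁, Vx₂, p_A⟨Vx₂, Vy₂, Vz₃⟩⟩ = p_A⟨Vx₁, Vy₂, Vz₃⟩. -/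
open CategoryTheory CategoryTheory.Limits

/-- The Mal'tsev operation applied to three generalized elements `x, y, z : T ⟶ V(A)`:
`p_A ∘ ⟨x, y, z⟩`. -/
noncomputable def VMaltsevOperation.papp {𝔸 𝔹 : Type*} [Category 𝔸] [Category 𝔹]
    [HasFiniteLimits 𝔹] {V : 𝔸 ⥤ 𝔹} (p : VMaltsevOperation V)
    {T : 𝔹} {A : 𝔸} (x y z : T ⟶ V.obj A) : T ⟶ V.obj A :=
  prod.lift x (prod.lift y z) ≫ p.app A

/-- Property (P1) for a triple `(A, s, t)`: for all `α, β, γ : X ⟶ A` with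
`s∘α = s∘β` and `t∘β = t∘γ` there is a unique `φ : X ⟶ A` with
`V(φ) = p_A ∘ ⟨V(α), V(β), V(γ)⟩`. -/
def PropertyP1 {𝔸 𝔹 : Type*} [Category 𝔸] [Category 𝔹]
    [HasFiniteLimits 𝔹] {V : 𝔸 ⥤ 𝔹} (p : VMaltsevOperation V)
    {A : 𝔸} (s t : A ⟶ A) : Prop :=
  ∀ (X : 𝔸) (α β γ : X ⟶ A), α ≫ s = β ≫ s → β ≫ t = γ ≫ t →
    ∃! φ : X ⟶ A, V.map φ = p.papp (V.map α) (V.map β) (V.map γ)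

/-!
Apply (P1) once, to the generic triple: on the object `triples s t` of triples `(a, b, c)` with
`s a = s b` and `t b = t c` it yields `q` with `V q = p⟨V π₁, V π₂, V π₃⟩`. Since `p` is natural
and is computed componentwise on the projections, `p⟨V q ∘ u, V q ∘ v, V q ∘ w⟩` can then be
evaluated componentwise. For `u, v, w` the triples `(x₁, x₂, x₂)`, `(x₂, x₂, x₂)`, `(x₂, y₂, z₃)`
the components are `p⟨x₁, x₂, x₂⟩ = x₁`, `p⟨x₂, x₂, y₂⟩ = y₂` and `p⟨x₂, x₂, z₃⟩ = z₃`.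
-/

namespace VMaltsevOperation

variable {𝔸 𝔹 : Type*} [Category 𝔸] [Category 𝔹] [HasFiniteLimits 𝔹] {V : 𝔸 ⥤ 𝔹}
  (p : VMaltsevOperation V)

@[simp]
theorem papp_self_self_left {T : 𝔹} {A : 𝔸} (x y : T ⟶ V.obj A) : p.papp x y y = x :=
  p.maltsev_left x y

@[simp]
theorem papp_self_self_right {T : 𝔹} {A : 𝔸} (x y : T ⟶ V.obj A) : p.papp y y x = x :=
  p.maltsev_right x y

theorem comp_papp {T T' : 𝔹} {A : 𝔸} (u : T' ⟶ T) (x y z : T ⟶ V.obj A) :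
    u ≫ p.papp x y z = p.papp (u ≫ x) (u ≫ y) (u ≫ z) := by
  simp only [papp, prod.comp_lift_assoc, prod.comp_lift]

theorem papp_comp_map {T : 𝔹} {A B : 𝔸} (x y z : T ⟶ V.obj A) (f : A ⟶ B) :
    p.papp x y z ≫ V.map f = p.papp (x ≫ V.map f) (y ≫ V.map f) (z ≫ V.map f) := by
  simp [papp, ← p.naturality f]

theorem papp_comp_map_of_map_eq_papp {T : 𝔹} {A B : 𝔸} {q π₁ π₂ π₃ : B ⟶ A}
    (hq : V.map q = p.papp (V.map π₁) (V.map π₂) (V.map π₃)) (u v w : T ⟶ V.obj B) :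
    p.papp (u ≫ V.map q) (v ≫ V.map q) (w ≫ V.map q) =
      p.papp (p.papp (u ≫ V.map π₁) (v ≫ V.map π₁) (w ≫ V.map π₁))
        (p.papp (u ≫ V.map π₂) (v ≫ V.map π₂) (w ≫ V.map π₂))
        (p.papp (u ≫ V.map π₃) (v ≫ V.map π₃) (w ≫ V.map π₃)) := by
  rw [← papp_comp_map, hq, comp_papp, papp_comp_map, papp_comp_map, papp_comp_map]

end VMaltsevOperation

section Triples

variable {𝔸 : Type*} [Category 𝔸] [HasPullbacks 𝔸] {A : 𝔸} (s t : A ⟶ A)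

noncomputable abbrev triples : 𝔸 :=
  pullback (pullback.snd s s ≫ t) t

namespace triples

noncomputable def fst : triples s t ⟶ A :=
  pullback.fst _ _ ≫ pullback.fst s s

noncomputable def snd : triples s t ⟶ A :=
  pullback.fst _ _ ≫ pullback.snd s s

noncomputable def thd : triples s t ⟶ A :=
  pullback.snd _ _

theorem fst_comp_eq_snd_comp : fst s t ≫ s = snd s t ≫ s := by
  simp only [fst, snd, Category.assoc, pullback.condition]

theorem snd_comp_eq_thd_comp : snd s t ≫ t = thd s t ≫ t := by
  rw [snd, thd, Category.assoc, ← pullback.condition]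

variable {s t} {X : 𝔸} (a b c : X ⟶ A) (hab : a ≫ s = b ≫ s) (hbc : b ≫ t = c ≫ t)

noncomputable def lift : X ⟶ triples s t :=
  pullback.lift (pullback.lift a b hab) c (by rw [pullback.lift_snd_assoc, hbc])

@[simp]
theorem lift_fst : lift a b c hab hbc ≫ fst s t = a := by
  rw [lift, fst, pullback.lift_fst_assoc, pullback.lift_fst]

@[simp]
theorem lift_snd : lift a b c hab hbc ≫ snd s t = b := by
  rw [lift, snd, pullback.lift_fst_assoc, pullback.lift_snd]

@[simp]
theorem lift_thd : lift a b c hab hbc ≫ thd s t = c := by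
  rw [lift, thd, pullback.lift_snd]

end triples

end Triples

theorem maltsev_assoc_left_general
    {𝔸 𝔹 : Type*} [Category 𝔸] [Category 𝔹]
    [HasFiniteLimits 𝔸] [HasFiniteLimits 𝔹]
    (V : 𝔸 ⥤ 𝔹)
    (p : VMaltsevOperation V)
    {A : 𝔸} (s t : A ⟶ A)
    (hP1 : PropertyP1 p s t)
    {X : 𝔸} (x₁ x₂ y₂ z₃ : X ⟶ A)
    (h1 : x₁ ≫ s = x₂ ≫ s) (h2 : x₂ ≫ s = y₂ ≫ s) (h3 : y₂ ≫ t = z₃ ≫ t) :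
    p.papp (V.map x₁) (V.map x₂) (p.papp (V.map x₂) (V.map y₂) (V.map z₃)) =
      p.papp (V.map x₁) (V.map y₂) (V.map z₃) := by
  obtain ⟨q, hq, -⟩ := hP1 _ _ _ _ (triples.fst_comp_eq_snd_comp s t)
    (triples.snd_comp_eq_thd_comp s t)
  have hq_lift : ∀ (a b c : X ⟶ A) hab hbc,
      V.map (triples.lift a b c hab hbc) ≫ V.map q = p.papp (V.map a) (V.map b) (V.map c) := by
    intro a b c hab hbc
    simp [hq, p.comp_papp, ← V.map_comp]
  let w₁ := V.map (triples.lift (t := t) x₁ x₂ x₂ h1 rfl)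
  let w₂ := V.map (triples.lift (s := s) (t := t) x₂ x₂ x₂ rfl rfl)
  let w₃ := V.map (triples.lift x₂ y₂ z₃ h2 h3)
  calc _ = p.papp (w₁ ≫ V.map q) (w₂ ≫ V.map q) (w₃ ≫ V.map q) := by
          simp only [w₁, w₂, w₃, hq_lift, p.papp_self_self_left]
    _ = p.papp (p.papp (V.map x₁) (V.map x₂) (V.map x₂))
          (p.papp (V.map x₂) (V.map x₂) (V.map y₂))
          (p.papp (V.map x₂) (V.map x₂) (V.map z₃)) := by
          rw [p.papp_comp_map_of_map_eq_papp hq]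
          simp only [w₁, w₂, w₃, ← V.map_comp, triples.lift_fst, triples.lift_snd,
            triples.lift_thd]
    _ = _ := by simp only [p.papp_self_self_left, p.papp_self_self_right]

/-- Left absorption identity `p⟨x₁, x₂, p⟨x₂, y₂, z₃⟩⟩ = p⟨x₁, y₂, z₃⟩` for a
triple `(A, s, t)` satisfying (P1). -/
theorem maltsev_assoc_left
    {𝔸 𝔹 : Type*} [Category 𝔸] [Category 𝔹]
    [HasFiniteLimits 𝔸] [HasFiniteLimits 𝔹]
    (V : 𝔸 ⥤ 𝔹) [V.Faithful] [PreservesFiniteLimits V]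
    (p : VMaltsevOperation V)
    {A : 𝔸} (s t : A ⟶ A) (hst : t ≫ s = t) (hts : s ≫ t = s)
    (hP1 : PropertyP1 p s t)
    {X : 𝔸} (x₁ x₂ y₂ z₃ : X ⟶ A)
    (h1 : x₁ ≫ s = x₂ ≫ s) (h2 : x₂ ≫ s = y₂ ≫ s) (h3 : y₂ ≫ t = z₃ ≫ t) :
    p.papp (V.map x₁) (V.map x₂) (p.papp (V.map x₂) (V.map y₂) (V.map z₃)) =
      p.papp (V.map x₁) (V.map y₂) (V.map z₃) :=
  maltsev_assoc_left_general V p s t hP1 x₁ x₂ y₂ z₃ h1 h2 h3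
end
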